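/- arXiv:1903.01238 — 2 statements merged into one kernel-verified Lean document; each statement's English description precedes it below -/
import Mathlib

section
/- For every y > 0, the quotient exp(−2(τ+1)^{ν(δ)}) / δ^y tends to +∞ as δ → 0⁺. -/
/-!
With `u = -log δ → ∞` and `c = log(τ+1)/log(T+1) < 1`, the quotient equals
`exp (y u - 2 (u/k)^c)`, because `(τ+1)^(log L / log(T+1)) = L^c`. The exponent tends to `+∞`
since the sublinear term `u^c` is dominated by `y u`.
-/

open Real Set Filter

theorem Real.rpow_log_div_log_comm {a x : ℝ} (ha : 0 < a) (hx : 0 < x) (b : ℝ) :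
    a ^ (log x / log b) = x ^ (log a / log b) := by
  rw [rpow_def_of_pos ha, rpow_def_of_pos hx]
  ring_nf

theorem tendsto_mul_sub_const_mul_rpow_atTop {y c : ℝ} (hy : 0 < y) (hc : c < 1) (C : ℝ) :
    Tendsto (fun u : ℝ => y * u - C * u ^ c) atTop atTop := by
  have h_small : Tendsto (fun u : ℝ => C * u ^ (c - 1)) atTop (nhds 0) := by
    simpa [neg_sub] using (tendsto_rpow_neg_atTop (y := 1 - c) (by linarith)).const_mul C
  have h_factor : Tendsto (fun u : ℝ => u * (y - C * u ^ (c - 1))) atTop atTop :=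
    tendsto_id.atTop_mul_pos hy (by simpa using tendsto_const_nhds.sub h_small)
  refine h_factor.congr' ?_
  filter_upwards [eventually_gt_atTop 0] with u hu
  rw [show u ^ c = u ^ (c - 1) * u by rw [← rpow_add_one hu.ne']; ring_nf]
  ring

theorem exp_carleman_quotient_eq {T k τ δ : ℝ} (hk : 0 < k) (hτ : 0 < τ + 1) (hδ : δ ∈ Ioo 0 1)
    (y : ℝ) :
    exp (-2 * (τ + 1) ^ (log (log (δ ^ (-(1 / k)))) / log (T + 1))) / δ ^ y =
      exp (y * (-log δ) - 2 * (1 / k) ^ (log (τ + 1) / log (T + 1)) *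
        (-log δ) ^ (log (τ + 1) / log (T + 1))) := by
  obtain ⟨hδ0, hδ1⟩ := hδ
  have hu : 0 < -log δ := neg_pos.2 (log_neg hδ0 hδ1)
  have hL : log (δ ^ (-(1 / k))) = 1 / k * -log δ := by
    rw [log_rpow hδ0]; ring
  rw [rpow_log_div_log_comm hτ (by rw [hL]; positivity), hL, mul_rpow (by positivity) hu.le,
    rpow_def_of_pos hδ0 y, ← exp_sub]
  ring_nf

theorem exp_carleman_quotient_tendsto_atTop_general
    (T k τ : ℝ) (hk : 0 < k) (hτ : τ ∈ Ioo 0 T)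
    (y : ℝ) (hy : 0 < y) :
    Tendsto
      (fun δ : ℝ =>
        exp (-2 * (τ + 1) ^ (Real.log (Real.log (δ ^ (-(1 / k)))) / Real.log (T + 1))) / δ ^ y)
      (nhdsWithin 0 (Ioi 0)) atTop := by
  obtain ⟨hτ0, hτT⟩ := hτ
  set c := log (τ + 1) / log (T + 1)
  have hc : c < 1 :=
    (div_lt_one (log_pos (by linarith))).2 (log_lt_log (by linarith) (by linarith))
  have h_neg_log : Tendsto (fun δ : ℝ => -log δ) (nhdsWithin 0 (Ioi 0)) atTop :=
    tendsto_neg_atBot_atTop.comp tendsto_log_nhdsGT_zero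
  refine (tendsto_exp_atTop.comp
    ((tendsto_mul_sub_const_mul_rpow_atTop hy hc (2 * (1 / k) ^ c)).comp h_neg_log)).congr' ?_
  filter_upwards [Ioo_mem_nhdsGT one_pos] with δ hδ
  exact (exp_carleman_quotient_eq hk (by linarith) hδ y).symm

/-- **Lemma 3.1, part (3).** For every `y > 0`,
`exp(-2(τ+1)^{ν(δ)}) / δ^y → ∞` as `δ → 0⁺`, where
`ν(δ) = ln(ln(δ^{-1/k})) / ln(T+1)`. -/
theorem exp_carleman_quotient_tendsto_atTop
    (T k τ : ℝ) (hT : 0 < T) (hk : 0 < k) (hτ : τ ∈ Ioo 0 T)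
    (y : ℝ) (hy : 0 < y) :
    Tendsto
      (fun δ : ℝ =>
        exp (-2 * (τ + 1) ^ (Real.log (Real.log (δ ^ (-(1 / k)))) / Real.log (T + 1))) / δ ^ y)
      (nhdsWithin 0 (Ioi 0)) atTop :=
  exp_carleman_quotient_tendsto_atTop_general T k τ hk hτ y hy
end

section
/- Assume additionally the ellipticity lower bound: there is μ₁ > 0 with Σ_{i,j=1}^n a_{ij}(x,t) ξ_i ξ_j ≥ μ₁|ξ|² for all (x,t) ∈ U and ξ ∈ ℝⁿ. Then there exist constants C₁, C₂ > 0 and ν₀ > 1, depending only on n, K and μ₁, such that for every ν ≥ ν₀, every function u twice continuously differentiable on U, and every point (x,t) ∈ U with t ≥ 0: (u_t − Lu) u e^{2(t+1)^ν} ≥ C₁ |∇u|² e^{2(t+1)^ν} − C₂ ν (t+1)^{ν−1} u² e^{2(t+1)^ν} + ∂_t( (u²/2) e^{2(t+1)^ν} ) − (1/2) Σ_{i,j=1}^n ∂_{x_j}( a_{ij} u_{x_i} u e^{2(t+1)^ν} ) − (1/2) Σ_{i,j=1}^n ∂_{x_i}( a_{ij} u_{x_j} u e^{2(t+1)^ν}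 ). -/
open Real Set

/-- Partial derivative in time of a function `u(x,t)`. -/
noncomputable def partialT {n : ℕ} (u : (Fin n → ℝ) → ℝ → ℝ) (x : Fin n → ℝ) (t : ℝ) : ℝ :=
  deriv (fun s => u x s) t

/-- Partial derivative in the `i`-th spatial variable of a function `u(x,t)`. -/
noncomputable def partialX {n : ℕ} (i : Fin n) (u : (Fin n → ℝ) → ℝ → ℝ)
    (x : Fin n → ℝ) (t : ℝ) : ℝ :=
  deriv (fun s => u (Function.update x i s) t) (x i)

/-- The second order operator `(Lu)(x,t) = Σ_{i,j} a_{ij}(x,t) u_{x_i x_j}(x,t)`. -/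
noncomputable def Lop {n : ℕ} (a : Fin n → Fin n → (Fin n → ℝ) → ℝ → ℝ)
    (u : (Fin n → ℝ) → ℝ → ℝ) (x : Fin n → ℝ) (t : ℝ) : ℝ :=
  ∑ i, ∑ j, a i j x t * partialX i (partialX j u) x t

/-!
Write `w = exp (2 (t + 1) ^ ν)`. By the product rule
`∂ₜ (u² w / 2) = u uₜ w + ν (t + 1) ^ (ν - 1) u² w`, and the `x_j`-derivative of each flux
`a_ij u_{x_i} u w` splits into a term with `∂a`, a Hessian term and a gradient term. By the
symmetry of second derivatives the Hessian terms reproduce `(L u) u w`, so the difference of the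
two sides of the estimate is `w` times the quadratic form `Σ a_ij u_{x_i} u_{x_j}`, plus
first-order terms `(∂a) u_x u`, plus a multiple of `u²`. Ellipticity bounds the quadratic form
below by `μ₁ |∇u|²`; Young's inequality absorbs the first-order terms into half of it at the cost
of `n³ K² / (2 μ₁) u²`, which `ν (t + 1) ^ (ν - 1) u²` dominates since
`ν (t + 1) ^ (ν - 1) ≥ 1` for `ν ≥ 1`, `t ≥ 0`.
-/

open Function Filter Topology

variable {n : ℕ}

section Partials

variable {f g : (Fin n → ℝ) → ℝ → ℝ} {x : Fin n → ℝ} {t : ℝ}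

theorem hasDerivAt_update_fderiv (hf : DifferentiableAt ℝ (uncurry f) (x, t)) (i : Fin n) :
    HasDerivAt (fun s => f (update x i s) t)
      (fderiv ℝ (uncurry f) (x, t) (Pi.single i 1, 0)) (x i) := by
  have hpath : HasDerivAt (fun s => (update x i s, t)) ((Pi.single i 1, 0) : (Fin n → ℝ) × ℝ)
      (x i) := (hasDerivAt_update x i (x i)).prodMk (hasDerivAt_const _ t)
  have hf' : HasFDerivAt (uncurry f) (fderiv ℝ (uncurry f) (x, t)) (update x i (x i), t) := by
    simpa using hf.hasFDerivAt
  exact hf'.comp_hasDerivAt (x i) hpath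

theorem partialX_eq_fderiv (hf : DifferentiableAt ℝ (uncurry f) (x, t)) (i : Fin n) :
    partialX i f x t = fderiv ℝ (uncurry f) (x, t) (Pi.single i 1, 0) :=
  (hasDerivAt_update_fderiv hf i).deriv

theorem hasDerivAt_partialX (hf : DifferentiableAt ℝ (uncurry f) (x, t)) (i : Fin n) :
    HasDerivAt (fun s => f (update x i s) t) (partialX i f x t) (x i) :=
  partialX_eq_fderiv hf i ▸ hasDerivAt_update_fderiv hf i

theorem hasDerivAt_partialT (hf : DifferentiableAt ℝ (uncurry f) (x, t)) :
    HasDerivAt (fun s => f x s) (partialT f x t) t := by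
  have hpath : HasDerivAt (fun s => (x, s)) ((0, 1) : (Fin n → ℝ) × ℝ) t :=
    (hasDerivAt_const t x).prodMk (hasDerivAt_id t)
  exact (hf.hasFDerivAt.comp_hasDerivAt t hpath).differentiableAt.hasDerivAt

theorem partialX_mul (hf : DifferentiableAt ℝ (uncurry f) (x, t))
    (hg : DifferentiableAt ℝ (uncurry g) (x, t)) (i : Fin n) :
    partialX i (fun y s => f y s * g y s) x t
      = partialX i f x t * g x t + f x t * partialX i g x t := by
  refine ((hasDerivAt_partialX hf i).fun_mul (hasDerivAt_partialX hg i)).deriv.trans ?_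
  simp

theorem partialX_mul_of_time (w : ℝ → ℝ) (i : Fin n) :
    partialX i (fun y s => f y s * w s) x t = partialX i f x t * w t :=
  deriv_mul_const_field (w t)

theorem partialT_sq_half_mul {w : ℝ → ℝ} {w' : ℝ} (hf : DifferentiableAt ℝ (uncurry f) (x, t))
    (hw : HasDerivAt w w' t) :
    partialT (fun y s => f y s ^ 2 / 2 * w s) x t
      = f x t * partialT f x t * w t + f x t ^ 2 / 2 * w' := by
  have h := (((hasDerivAt_partialT hf).fun_pow 2).div_const 2).fun_mul hw
  rw [partialT, h.deriv]
  ring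

end Partials

section SecondOrder

variable {u : (Fin n → ℝ) → ℝ → ℝ} {x : Fin n → ℝ} {t : ℝ}

theorem uncurry_partialX_eventuallyEq (hu : ContDiffAt ℝ 2 (uncurry u) (x, t)) (j : Fin n) :
    uncurry (partialX j u) =ᶠ[𝓝 (x, t)] fun q => fderiv ℝ (uncurry u) q (Pi.single j 1, 0) := by
  filter_upwards [hu.eventually (by simp)] with q hq
  exact partialX_eq_fderiv (hq.differentiableAt (by norm_num)) j

theorem hasFDerivAt_uncurry_partialX (hu : ContDiffAt ℝ 2 (uncurry u) (x, t)) (j : Fin n) :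
    HasFDerivAt (uncurry (partialX j u))
      ((ContinuousLinearMap.apply ℝ ℝ ((Pi.single j 1, 0) : (Fin n → ℝ) × ℝ)).comp
        (fderiv ℝ (fderiv ℝ (uncurry u)) (x, t))) (x, t) := by
  have hD : DifferentiableAt ℝ (fderiv ℝ (uncurry u)) (x, t) :=
    (hu.fderiv_right (m := 1) (by norm_num)).differentiableAt (by norm_num)
  exact ((ContinuousLinearMap.apply ℝ ℝ _).hasFDerivAt.comp (x, t)
    hD.hasFDerivAt).congr_of_eventuallyEq (f := fun q => fderiv ℝ (uncurry u) q _)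
    (uncurry_partialX_eventuallyEq hu j)

theorem partialX_partialX_eq_fderiv_fderiv (hu : ContDiffAt ℝ 2 (uncurry u) (x, t))
    (i j : Fin n) :
    partialX i (partialX j u) x t
      = fderiv ℝ (fderiv ℝ (uncurry u)) (x, t) (Pi.single i 1, 0) (Pi.single j 1, 0) := by
  rw [partialX_eq_fderiv (hasFDerivAt_uncurry_partialX hu j).differentiableAt,
    (hasFDerivAt_uncurry_partialX hu j).fderiv]
  rfl

theorem partialX_partialX_comm (hu : ContDiffAt ℝ 2 (uncurry u) (x, t)) (i j : Fin n) :
    partialX i (partialX j u) x t = partialX j (partialX i u) x t := by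
  rw [partialX_partialX_eq_fderiv_fderiv hu, partialX_partialX_eq_fderiv_fderiv hu]
  exact hu.isSymmSndFDerivAt (by simp [minSmoothness_of_isRCLikeNormedField]) _ _

end SecondOrder

section EnergyIdentity

variable {u : (Fin n → ℝ) → ℝ → ℝ} {x : Fin n → ℝ} {t : ℝ}

theorem partialX_flux_eq {c : (Fin n → ℝ) → ℝ → ℝ} (hc : DifferentiableAt ℝ (uncurry c) (x, t))
    (hu : ContDiffAt ℝ 2 (uncurry u) (x, t)) (w : ℝ → ℝ) (l m : Fin n) :
    partialX l (fun y s => c y s * partialX m u y s * u y s * w s) x t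
      = (partialX l c x t * partialX m u x t * u x t
          + c x t * partialX l (partialX m u) x t * u x t
          + c x t * partialX m u x t * partialX l u x t) * w t := by
  have hu₁ : DifferentiableAt ℝ (uncurry u) (x, t) := hu.differentiableAt (by norm_num)
  have hum := (hasFDerivAt_uncurry_partialX hu m).differentiableAt
  rw [partialX_mul_of_time, partialX_mul (hc.mul hum) hu₁, partialX_mul hc hum]
  ring

theorem hasDerivAt_exp_two_mul_rpow (ν : ℝ) (ht : 0 < t + 1) :
    HasDerivAt (fun s => exp (2 * (s + 1) ^ ν))
      (2 * ν * (t + 1) ^ (ν - 1) * exp (2 * (t + 1) ^ ν)) t := by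
  have h := ((((hasDerivAt_id' t).add_const 1).rpow_const (p := ν) (Or.inl ht.ne')).const_mul
    2).exp
  convert h using 1
  ring

theorem half_sum_sum_fluxes_eq (A Ax Ay H : Fin n → Fin n → ℝ) (ξ : Fin n → ℝ) (v : ℝ) :
    1 / 2 * ∑ i, ∑ j, (Ax i j * ξ i * v + A i j * H i j * v + A i j * ξ i * ξ j)
      + 1 / 2 * ∑ i, ∑ j, (Ay i j * ξ j * v + A i j * H i j * v + A i j * ξ j * ξ i)
      = (∑ i, ∑ j, A i j * H i j) * v + (∑ i, ∑ j, A i j * ξ i * ξ j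
        + 1 / 2 * (∑ i, ∑ j, (Ax i j * ξ i + Ay i j * ξ j)) * v) := by
  simp only [Finset.mul_sum, Finset.sum_mul, ← Finset.sum_add_distrib]
  exact Finset.sum_congr rfl fun i _ => Finset.sum_congr rfl fun j _ => by ring

theorem partialT_energy_sub_fluxes {a : Fin n → Fin n → (Fin n → ℝ) → ℝ → ℝ}
    (ha : ∀ i j, DifferentiableAt ℝ (uncurry (a i j)) (x, t))
    (hu : ContDiffAt ℝ 2 (uncurry u) (x, t)) (ν : ℝ) (ht : 0 < t + 1) :
    partialT (fun x t => u x t ^ 2 / 2 * exp (2 * (t + 1) ^ ν)) x t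
      - 1 / 2 * ∑ i, ∑ j, partialX j (fun x t => a i j x t * partialX i u x t * u x t *
          exp (2 * (t + 1) ^ ν)) x t
      - 1 / 2 * ∑ i, ∑ j, partialX i (fun x t => a i j x t * partialX j u x t * u x t *
          exp (2 * (t + 1) ^ ν)) x t
      = ((partialT u x t - Lop a u x t) * u x t + ν * (t + 1) ^ (ν - 1) * u x t ^ 2
          - (∑ i, ∑ j, a i j x t * partialX i u x t * partialX j u x t
            + 1 / 2 * (∑ i, ∑ j, (partialX j (a i j) x t * partialX i u x t
              + partialX i (a i j) x t * partialX j u x t)) * u x t))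
        * exp (2 * (t + 1) ^ ν) := by
  simp only [partialT_sq_half_mul (hu.differentiableAt (by norm_num))
      (hasDerivAt_exp_two_mul_rpow ν ht), partialX_flux_eq (ha _ _) hu,
    partialX_partialX_comm hu, Lop]
  simp only [← Finset.sum_mul]
  linear_combination (-exp (2 * (t + 1) ^ ν)) * half_sum_sum_fluxes_eq (fun i j => a i j x t)
    (fun i j => partialX j (a i j) x t) (fun i j => partialX i (a i j) x t)
    (fun i j => partialX i (partialX j u) x t) (fun i => partialX i u x t) (u x t)

end EnergyIdentity

section Estimates

variable {μ K : ℝ} {ξ : Fin n → ℝ}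

theorem mul_le_half_mul_sq_add_sq_div (hμ : 0 < μ) (a b : ℝ) :
    a * b ≤ μ / 2 * a ^ 2 + b ^ 2 / (2 * μ) := by
  have h : 0 ≤ (μ * a - b) ^ 2 / (2 * μ) := by positivity
  have e : (μ * a - b) ^ 2 / (2 * μ) = μ / 2 * a ^ 2 + b ^ 2 / (2 * μ) - a * b := by
    field_simp
    ring
  linarith

theorem sum_sum_abs_mul_le {B : Fin n → Fin n → ℝ} (hμ : 0 < μ) (hB : ∀ i j, |B i j| ≤ K)
    (w : ℝ) :
    ∑ i, ∑ j, |B i j * ξ i * w| ≤ μ / 2 * ∑ i, ξ i ^ 2 + n ^ 3 * K ^ 2 / (2 * μ) * w ^ 2 := by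
  calc ∑ i, ∑ j, |B i j * ξ i * w|
      ≤ ∑ i, ∑ _j : Fin n, K * (|ξ i| * |w|) := by
        gcongr with i _ j
        rw [abs_mul, abs_mul, mul_assoc]
        exact mul_le_mul_of_nonneg_right (hB i j) (by positivity)
    _ = ∑ i, |ξ i| * (n * K * |w|) := by
        simp only [Finset.sum_const, Finset.card_univ, Fintype.card_fin, nsmul_eq_mul]
        exact Finset.sum_congr rfl fun i _ => by ring
    _ ≤ ∑ i, (μ / 2 * |ξ i| ^ 2 + (n * K * |w|) ^ 2 / (2 * μ)) := by
        gcongr with i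
        exact mul_le_half_mul_sq_add_sq_div hμ _ _
    _ = μ / 2 * ∑ i, ξ i ^ 2 + n ^ 3 * K ^ 2 / (2 * μ) * w ^ 2 := by
        simp only [Finset.sum_add_distrib, ← Finset.mul_sum, sq_abs, Finset.sum_const,
          Finset.card_univ, Fintype.card_fin, nsmul_eq_mul, mul_pow]
        ring

theorem le_quadratic_add_first_order {A B C : Fin n → Fin n → ℝ} (hμ : 0 < μ)
    (hA : μ * ∑ i, ξ i ^ 2 ≤ ∑ i, ∑ j, A i j * ξ i * ξ j) (hB : ∀ i j, |B i j| ≤ K)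
    (hC : ∀ i j, |C i j| ≤ K) (w : ℝ) :
    μ / 2 * ∑ i, ξ i ^ 2 - n ^ 3 * K ^ 2 / (2 * μ) * w ^ 2
      ≤ ∑ i, ∑ j, A i j * ξ i * ξ j + 1 / 2 * (∑ i, ∑ j, (B i j * ξ i + C i j * ξ j)) * w := by
  have hfirst : |(∑ i, ∑ j, (B i j * ξ i + C i j * ξ j)) * w|
      ≤ ∑ i, ∑ j, |B i j * ξ i * w| + ∑ i, ∑ j, |C j i * ξ i * w| := by
    rw [Finset.sum_comm (f := fun i j => |C j i * ξ i * w|), ← Finset.sum_add_distrib]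
    simp only [← Finset.sum_add_distrib, Finset.sum_mul, add_mul]
    refine (Finset.abs_sum_le_sum_abs _ _).trans (Finset.sum_le_sum fun i _ => ?_)
    exact (Finset.abs_sum_le_sum_abs _ _).trans
      (Finset.sum_le_sum fun j _ => abs_add_le _ _)
  have hB' := sum_sum_abs_mul_le (ξ := ξ) hμ hB w
  have hC' := sum_sum_abs_mul_le (ξ := ξ) hμ (fun i j => hC j i) w
  have := neg_abs_le ((∑ i, ∑ j, (B i j * ξ i + C i j * ξ j)) * w)
  linarith

end Estimates

theorem pointwise_estimate_2_8_general
    (n : ℕ)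
    (U : Set ((Fin n → ℝ) × ℝ)) (hUopen : IsOpen U)
    (a : Fin n → Fin n → (Fin n → ℝ) → ℝ → ℝ)
    (ha : ∀ i j, ContDiffOn ℝ 1 (fun p : (Fin n → ℝ) × ℝ => a i j p.1 p.2) U)
    (K : ℝ)
    (haxbd : ∀ i j l, ∀ p ∈ U, |partialX l (a i j) p.1 p.2| ≤ K)
    (μ₁ : ℝ) (hμ₁ : 0 < μ₁)
    (hell : ∀ p ∈ U, ∀ ξ : Fin n → ℝ,
      μ₁ * ∑ i, ξ i ^ 2 ≤ ∑ i, ∑ j, a i j p.1 p.2 * ξ i * ξ j) :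
    ∃ C₁ : ℝ, 0 < C₁ ∧ ∃ C₂ : ℝ, 0 < C₂ ∧ ∃ ν₀ : ℝ, 1 < ν₀ ∧
      ∀ ν : ℝ, ν₀ ≤ ν →
      ∀ u : (Fin n → ℝ) → ℝ → ℝ,
        ContDiffOn ℝ 2 (fun p : (Fin n → ℝ) × ℝ => u p.1 p.2) U →
        ∀ p ∈ U, 0 ≤ p.2 →
          (partialT u p.1 p.2 - Lop a u p.1 p.2) * u p.1 p.2 * exp (2 * (p.2 + 1) ^ ν) ≥
            C₁ * (∑ i, (partialX i u p.1 p.2) ^ 2) * exp (2 * (p.2 + 1) ^ ν)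
            - C₂ * ν * (p.2 + 1) ^ (ν - 1) * (u p.1 p.2) ^ 2 * exp (2 * (p.2 + 1) ^ ν)
            + partialT (fun x t => (u x t) ^ 2 / 2 * exp (2 * (t + 1) ^ ν)) p.1 p.2
            - (1 / 2) * ∑ i, ∑ j,
                partialX j (fun x t => a i j x t * partialX i u x t * u x t *
                  exp (2 * (t + 1) ^ ν)) p.1 p.2
            - (1 / 2) * ∑ i, ∑ j,
                partialX i (fun x t => a i j x t * partialX j u x t * u x t *
                  exp (2 * (t + 1) ^ ν)) p.1 p.2 := by
  set c := n ^ 3 * K ^ 2 / (2 * μ₁)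
  refine ⟨μ₁ / 2, by positivity, c + 1, by positivity, 2, one_lt_two, ?_⟩
  rintro ν hν u hu ⟨x, t⟩ hp (ht : 0 ≤ t)
  have hpU := hUopen.mem_nhds hp
  have hidentity := partialT_energy_sub_fluxes
    (fun i j => ((ha i j).contDiffAt hpU).differentiableAt one_ne_zero) (hu.contDiffAt hpU) ν
    (by linarith)
  have hbound := le_quadratic_add_first_order hμ₁ (hell _ hp fun i => partialX i u x t)
    (fun i j => haxbd i j j _ hp) (fun i j => haxbd i j i _ hp) (u x t)
  have hweight : 1 ≤ ν * (t + 1) ^ (ν - 1) :=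
    one_le_mul_of_one_le_of_one_le (by linarith) (one_le_rpow (by linarith) (by linarith))
  have hc : c * u x t ^ 2 ≤ ν * (t + 1) ^ (ν - 1) * (c * u x t ^ 2) :=
    le_mul_of_one_le_left (by positivity) hweight
  have hE := (exp_pos (2 * (t + 1) ^ ν)).le
  linarith [mul_le_mul_of_nonneg_right hbound hE, mul_le_mul_of_nonneg_right hc hE]

/-- **pointwise estimate (2.8).** -/
theorem pointwise_estimate_2_8
    (n : ℕ) (hn : 1 ≤ n)
    (U : Set ((Fin n → ℝ) × ℝ)) (hUopen : IsOpen U) (hUsub : ∀ p ∈ U, (-1:ℝ) < p.2)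
    (a : Fin n → Fin n → (Fin n → ℝ) → ℝ → ℝ) (hsym : ∀ i j, a i j = a j i)
    (ha : ∀ i j, ContDiffOn ℝ 1 (fun p : (Fin n → ℝ) × ℝ => a i j p.1 p.2) U)
    (K : ℝ) (hK : 0 < K)
    (habd : ∀ i j, ∀ p ∈ U, |a i j p.1 p.2| ≤ K)
    (hatbd : ∀ i j, ∀ p ∈ U, |partialT (a i j) p.1 p.2| ≤ K)
    (haxbd : ∀ i j l, ∀ p ∈ U, |partialX l (a i j) p.1 p.2| ≤ K)
    (μ₁ : ℝ) (hμ₁ : 0 < μ₁)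
    (hell : ∀ p ∈ U, ∀ ξ : Fin n → ℝ,
      μ₁ * ∑ i, ξ i ^ 2 ≤ ∑ i, ∑ j, a i j p.1 p.2 * ξ i * ξ j) :
    ∃ C₁ : ℝ, 0 < C₁ ∧ ∃ C₂ : ℝ, 0 < C₂ ∧ ∃ ν₀ : ℝ, 1 < ν₀ ∧
      ∀ ν : ℝ, ν₀ ≤ ν →
      ∀ u : (Fin n → ℝ) → ℝ → ℝ,
        ContDiffOn ℝ 2 (fun p : (Fin n → ℝ) × ℝ => u p.1 p.2) U →
        ∀ p ∈ U, 0 ≤ p.2 →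
          (partialT u p.1 p.2 - Lop a u p.1 p.2) * u p.1 p.2 * exp (2 * (p.2 + 1) ^ ν) ≥
            C₁ * (∑ i, (partialX i u p.1 p.2) ^ 2) * exp (2 * (p.2 + 1) ^ ν)
            - C₂ * ν * (p.2 + 1) ^ (ν - 1) * (u p.1 p.2) ^ 2 * exp (2 * (p.2 + 1) ^ ν)
            + partialT (fun x t => (u x t) ^ 2 / 2 * exp (2 * (t + 1) ^ ν)) p.1 p.2
            - (1 / 2) * ∑ i, ∑ j,
                partialX j (fun x t => a i j x t * partialX i u x t * u x t *
                  exp (2 * (t + 1) ^ ν)) p.1 p.2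
            - (1 / 2) * ∑ i, ∑ j,
                partialX i (fun x t => a i j x t * partialX j u x t * u x t *
                  exp (2 * (t + 1) ^ ν)) p.1 p.2 :=
  pointwise_estimate_2_8_general n U hUopen a ha K haxbd μ₁ hμ₁ hell
end
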